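/- arXiv:2408.05865 — 6 statements merged into one kernel-verified Lean document; each statement's English description precedes it below -/
import Mathlib

section
/- If G is a connected simple graph of diameter at most 2, then every proper vertex k-coloring of G is a strong conflict-free vertex-connection k-coloring of G. -/
open SimpleGraph

/-- `f` is a strong conflict-free vertex-connection coloring of `G`: any two distinct
vertices are joined by a shortest path on which some color occurs exactly once. -/
def IsSCFVC {V α : Type*} [DecidableEq α] (G : SimpleGraph V) (f : V → α) : Prop :=
  ∀ u v : V, u ≠ v → ∃ p : G.Walk u v, p.length = G.dist u v ∧
    ∃ c : α, (p.support.map f).count c = 1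

/-- In a connected graph of diameter at most `2`, every proper vertex `k`-coloring is a
strong conflict-free vertex-connection `k`-coloring. -/
theorem stmt1 {V : Type*} [Fintype V] (G : SimpleGraph V) (hG : G.Connected)
    (hdiam : ∀ u v : V, G.dist u v ≤ 2)
    (k : ℕ) (f : V → Fin k) (hf : ∀ u v : V, G.Adj u v → f u ≠ f v) :
    IsSCFVC G f := by
  intro u v huv
  obtain ⟨p, hp⟩ := (hG u v).exists_walk_length_eq_dist
  refine ⟨p, hp, ?_⟩
  have hlen : p.length ≤ 2 := hp ▸ hdiam u v
  match p, hlen with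
  | .nil, _ => exact absurd rfl huv
  | .cons h .nil, _ =>
      refine ⟨f u, ?_⟩
      simp [List.count_cons, (hf _ _ h).symm]
  | .cons (v := m) h (.cons h' .nil), _ =>
      by_cases hc : f u = f v
      · refine ⟨f m, ?_⟩
        simp [List.count_cons, (hf _ _ h), (hf _ _ h'), hc ▸ (hf _ _ h)]
      · refine ⟨f u, ?_⟩
        simp [List.count_cons, (hf _ _ h).symm, Ne.symm hc]
  | .cons _ (.cons _ (.cons _ _)), hl => simp at hl
end

section
/- If G is a connected simple graph of diameter at most 2, then svcfc(G) = χ(G). -/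
open SimpleGraph

/-- The strong conflict-free vertex-connection number. -/
noncomputable def svcfc {V : Type*} (G : SimpleGraph V) : ℕ :=
  sInf {k | ∃ f : V → Fin k, IsSCFVC G f}

/-!
On a shortest path between adjacent vertices, i.e. an edge `uv`, some color occurs exactly once
only if `u` and `v` have different colors; so every strong conflict-free coloring is proper.
Conversely, when the diameter is at most `2`, shortest paths have at most three vertices, and
along such a path with consecutive colors distinct, either the first color differs from the last
and occurs once, or the two ends agree and the middle color occurs once.
-/

namespace SimpleGraph

variable {V α : Type*} [DecidableEq α] {G : SimpleGraph V}

theorem IsSCFVC.ne_of_adj {f : V → α} (hf : IsSCFVC G f) {u v : V} (h : G.Adj u v) :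
    f u ≠ f v := by
  obtain ⟨p, hp, c, hc⟩ := hf u v h.ne
  rw [dist_eq_one_iff_adj.mpr h] at hp
  cases p with
  | nil => simp at hp
  | cons _ q =>
    cases q with
    | cons _ _ => simp at hp
    | nil =>
      intro huv
      by_cases hvc : f v = c <;> simp [huv, hvc] at hc

theorem Coloring.exists_count_support_eq_one (C : G.Coloring α) {u v : V} (p : G.Walk u v)
    (hp : p.length ≤ 2) : ∃ c : α, (p.support.map C).count c = 1 := by
  match p, hp with
  | .nil, _ => exact ⟨C u, by simp⟩
  | .cons h .nil, _ => exact ⟨C u, by simp [(C.valid h).symm]⟩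
  | .cons (v := w) h₁ (.cons h₂ .nil), _ =>
    have huw := C.valid h₁
    have hwv := C.valid h₂
    by_cases huv : C u = C v
    · exact ⟨C w, by simp [hwv, hwv.symm, huv]⟩
    · exact ⟨C u, by simp [huw.symm, Ne.symm huv]⟩
  | .cons _ (.cons _ (.cons _ _)), hp => simp at hp

theorem Coloring.isSCFVC (hG : G.Connected) (hdiam : ∀ u v : V, G.dist u v ≤ 2)
    (C : G.Coloring α) : IsSCFVC G C := by
  intro u v _
  obtain ⟨p, hp⟩ := hG.exists_walk_length_eq_dist u v
  exact ⟨p, hp, C.exists_count_support_eq_one p (hp ▸ hdiam u v)⟩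

theorem colorable_iff_exists_isSCFVC (hG : G.Connected) (hdiam : ∀ u v : V, G.dist u v ≤ 2)
    (k : ℕ) : G.Colorable k ↔ ∃ f : V → Fin k, IsSCFVC G f :=
  ⟨fun ⟨C⟩ => ⟨C, C.isSCFVC hG hdiam⟩,
    fun ⟨f, hf⟩ => ⟨Coloring.mk f fun h => hf.ne_of_adj h⟩⟩

end SimpleGraph

/-- For a connected graph of diameter at most `2`, `svcfc(G) = χ(G)`. -/
theorem stmt2 {V : Type*} [Fintype V] (G : SimpleGraph V) (hG : G.Connected)
    (hdiam : ∀ u v : V, G.dist u v ≤ 2) :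
    (svcfc G : ℕ∞) = G.chromaticNumber := by
  have hS : {k | ∃ f : V → Fin k, IsSCFVC G f} = {k | G.Colorable k} :=
    Set.ext fun k => (colorable_iff_exists_isSCFVC hG hdiam k).symm
  rw [svcfc, hS, G.colorable_of_fintype.chromaticNumber_eq_sInf]
end

section
/- A connected simple graph G with at least two vertices admits a strong conflict-free vertex-connection 2-coloring if and only if G is a complete bipartite graph (its vertex set can be partitioned into two nonempty independent sets A and B such that every vertex of A is adjacent to every vertex of B). -/
open SimpleGraph

/-!
A conflict-free coloring is proper, since the only shortest path between adjacent vertices is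
the edge itself. A proper `2`-coloring alternates along walks, so on a walk of length at least
three both colors occur twice, and a walk of length two joins vertices of the same color; hence
two vertices of different colors are joined by a walk with a unique color only if they are
adjacent. Conversely, in a complete bipartite graph two vertices of the same part are at
distance two through any vertex of the other part, whose color is then unique.
-/

lemma Fin.two_eq_of_ne_of_ne : ∀ {a b c : Fin 2}, a ≠ b → b ≠ c → a = c := by decide

section

variable {V α : Type*} {G : SimpleGraph V}

lemma IsSCFVC.ne_of_adj [DecidableEq α] {f : V → α} (hf : IsSCFVC G f) {a b : V}
    (hab : G.Adj a b) : f a ≠ f b := by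
  intro heq
  obtain ⟨p, hlen, c, hc⟩ := hf a b hab.ne
  rw [dist_eq_one_iff_adj.mpr hab] at hlen
  match p, hlen with
  | .cons _ .nil, _ =>
    by_cases hcb : f b = c <;> simp [heq, hcb] at hc

lemma SimpleGraph.Walk.adj_of_count_support_map_eq_one {f : V → Fin 2}
    (hf : ∀ a b, G.Adj a b → f a ≠ f b) {u v : V} (huv : f u ≠ f v) (p : G.Walk u v)
    {c : Fin 2} (hc : (p.support.map f).count c = 1) : G.Adj u v := by
  match p with
  | .nil => exact absurd rfl huv
  | .cons h .nil => exact h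
  | .cons h₁ (.cons h₂ .nil) => exact absurd (Fin.two_eq_of_ne_of_ne (hf _ _ h₁) (hf _ _ h₂)) huv
  | .cons (v := x) h₁ (.cons h₂ (.cons h₃ q)) =>
    have h₁₂ := hf _ _ h₁
    have h₀₂ := Fin.two_eq_of_ne_of_ne h₁₂ (hf _ _ h₂)
    have h₁₃ := Fin.two_eq_of_ne_of_ne (hf _ _ h₂) (hf _ _ h₃)
    have hc' : c = f u ∨ c = f x := (eq_or_ne c (f u)).imp_right (Fin.two_eq_of_ne_of_ne · h₁₂)
    rw [Walk.support_cons, Walk.support_cons, Walk.support_cons, ← q.cons_tail_support] at hc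
    simp only [List.map_cons, ← h₀₂, ← h₁₃, List.count_cons] at hc
    rcases hc' with rfl | rfl <;> simp [h₁₂, h₁₂.symm] at hc

lemma IsSCFVC.adj_iff_ne {f : V → Fin 2} (hf : IsSCFVC G f) (u v : V) :
    G.Adj u v ↔ f u ≠ f v := by
  refine ⟨hf.ne_of_adj, fun huv => ?_⟩
  obtain ⟨p, -, c, hc⟩ := hf u v (ne_of_apply_ne f huv)
  exact p.adj_of_count_support_map_eq_one (fun _ _ => hf.ne_of_adj) huv hc

lemma isSCFVC_of_adj_iff_ne [DecidableEq α] {f : V → α} (hadj : ∀ u v, G.Adj u v ↔ f u ≠ f v)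
    (hf : ∀ u, ∃ w, f w ≠ f u) : IsSCFVC G f := by
  intro u v huv
  by_cases hfuv : f u = f v
  · obtain ⟨w, hw⟩ := hf u
    have huw : G.Adj u w := (hadj u w).mpr (Ne.symm hw)
    have hwv : G.Adj w v := (hadj w v).mpr (hfuv ▸ hw)
    let p : G.Walk u v := .cons huw (.cons hwv .nil)
    have hnadj : ¬G.Adj u v := fun h => (hadj u v).mp h hfuv
    refine ⟨p, le_antisymm ?_ (dist_le p), f w, ?_⟩
    · exact Reachable.one_lt_dist_of_ne_of_not_adj ⟨p⟩ huv hnadj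
    · simp [p, hfuv ▸ hw, Ne.symm hw]
  · have h : G.Adj u v := (hadj u v).mpr hfuv
    refine ⟨.cons h .nil, by simp [dist_eq_one_iff_adj.mpr h], f u, ?_⟩
    simp [Ne.symm hfuv]

lemma exists_completeBipartition_of_adj_iff_ne {f : V → Fin 2}
    (hadj : ∀ u v, G.Adj u v ↔ f u ≠ f v) {x y : V} (hxy : f x ≠ f y) :
    ∃ A B : Set V, A.Nonempty ∧ B.Nonempty ∧ A ∩ B = ∅ ∧ A ∪ B = Set.univ ∧
      (∀ u ∈ A, ∀ v ∈ A, ¬ G.Adj u v) ∧ (∀ u ∈ B, ∀ v ∈ B, ¬ G.Adj u v) ∧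
      (∀ u ∈ A, ∀ v ∈ B, G.Adj u v) := by
  refine ⟨{v | f v = f x}, {v | f v ≠ f x}, ⟨x, rfl⟩, ⟨y, hxy.symm⟩, ?_, ?_, ?_, ?_, ?_⟩
  · simp [Set.eq_empty_iff_forall_notMem]
  · simp [Set.eq_univ_iff_forall, em]
  · intro u hu v hv
    simp_all
  · intro u hu v hv
    simpa [hadj] using Fin.two_eq_of_ne_of_ne hu (Ne.symm hv)
  · intro u hu v hv
    simp_all [eq_comm]

end

/-- A connected graph on at least two vertices has a strong conflict-free vertex-connection
`2`-coloring iff it is complete bipartite. -/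
theorem stmt3 {V : Type*} [Fintype V] (G : SimpleGraph V) (hG : G.Connected)
    (hcard : 2 ≤ Fintype.card V) :
    (∃ f : V → Fin 2, IsSCFVC G f) ↔
    ∃ A B : Set V, A.Nonempty ∧ B.Nonempty ∧ A ∩ B = ∅ ∧ A ∪ B = Set.univ ∧
      (∀ u ∈ A, ∀ v ∈ A, ¬ G.Adj u v) ∧ (∀ u ∈ B, ∀ v ∈ B, ¬ G.Adj u v) ∧
      (∀ u ∈ A, ∀ v ∈ B, G.Adj u v) := by
  constructor
  · rintro ⟨f, hf⟩
    have : Nontrivial V := Fintype.one_lt_card_iff_nontrivial.mp hcard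
    obtain ⟨x⟩ : Nonempty V := inferInstance
    obtain ⟨y, hxy⟩ := hG.preconnected.exists_adj_of_nontrivial x
    exact exists_completeBipartition_of_adj_iff_ne hf.adj_iff_ne (hf.ne_of_adj hxy)
  · rintro ⟨A, B, ⟨a, ha⟩, ⟨b, hb⟩, hdisj, hcover, hAA, hBB, hAB⟩
    classical
    obtain rfl : B = Aᶜ :=
      (IsCompl.compl_eq ⟨Set.disjoint_iff_inter_eq_empty.mpr hdisj, codisjoint_iff.mpr hcover⟩).symm
    refine ⟨fun v => if v ∈ A then 0 else 1, isSCFVC_of_adj_iff_ne (fun u v => ?_) (fun u => ?_)⟩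
    · by_cases hu : u ∈ A <;> by_cases hv : v ∈ A <;> simp only [hu, hv, if_true, if_false]
      · simpa using hAA u hu v hv
      · simpa using hAB u hu v hv
      · simpa using (hAB v hv u hu).symm
      · simpa using hBB u hu v hv
    · by_cases hu : u ∈ A
      · exact ⟨b, by simp_all⟩
      · exact ⟨a, by simp_all⟩
end

section
/- Let G be a simple graph with at least two vertices that is not complete, and let G' be obtained from G by adding one new vertex adjacent to every vertex of G. Then for every integer k ≥ 1, G' has diameter exactly 2, and G admits a proper vertex (k−1)-coloring if and only if G' admits a strong conflict-free vertex-connection k-coloring. -/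
open SimpleGraph

/-- The graph obtained from `G` by adding one new vertex (`none`) adjacent to every
vertex of `G`. -/
def cone {V : Type*} (G : SimpleGraph V) : SimpleGraph (Option V) :=
  SimpleGraph.fromRel (fun x y =>
    match x, y with
    | some u, some v => G.Adj u v
    | none, some _ => True
    | _, _ => False)

/-!
Every shortest path of length 1 or 2 carries a color exactly once as soon as the colors along it
are pairwise distinct. In the cone all distances are at most 2, so giving the apex a fresh color
on top of a proper coloring of `G` is conflict-free. Conversely a conflict-free coloring is proper
on edges, and since the apex is adjacent to everything, its color is unused on `G`.
-/

namespace SimpleGraph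

variable {V α : Type*} {H : SimpleGraph V} {u v w : V}

lemma Walk.support_eq_of_length_eq_one {p : H.Walk u v} (h : p.length = 1) :
    p.support = [u, v] := by
  cases p with
  | nil => simp at h
  | cons _ q => cases q with
    | nil => simp
    | cons _ r => simp at h

lemma edist_le_two_of_forall_adj (hw : ∀ x, x ≠ w → H.Adj w x) (u v : V) :
    H.edist u v ≤ 2 := by
  have hle : ∀ x, H.edist w x ≤ 1 := fun x => by
    rw [edist_le_one_iff_adj_or_eq]
    by_cases hx : x = w
    · exact Or.inr hx.symm
    · exact Or.inl (hw x hx)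
  calc H.edist u v ≤ H.edist u w + H.edist w v := H.edist_triangle
    _ = H.edist w u + H.edist w v := by rw [edist_comm]
    _ ≤ 1 + 1 := add_le_add (hle u) (hle v)
    _ = 2 := one_add_one_eq_two

lemma dist_eq_two_of_adj_of_adj (huv : u ≠ v) (hnadj : ¬ H.Adj u v) (huw : H.Adj u w)
    (hwv : H.Adj w v) : H.dist u v = 2 := by
  rw [dist, edist_eq_two_iff.mpr ⟨huv, hnadj, w, huw, hwv.symm⟩]
  rfl

variable [DecidableEq α] {f : V → α}

lemma exists_shortest_walk_count_eq_one_of_adj (h : H.Adj u v) (hf : f u ≠ f v) :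
    ∃ p : H.Walk u v, p.length = H.dist u v ∧ ∃ c, (p.support.map f).count c = 1 :=
  ⟨h.toWalk, by simp [dist_eq_one_iff_adj.mpr h], f v, by simp [hf]⟩

lemma exists_shortest_walk_count_eq_one_of_adj_of_adj (huv : u ≠ v) (hnadj : ¬ H.Adj u v)
    (huw : H.Adj u w) (hwv : H.Adj w v) (hfu : f u ≠ f w) (hfv : f v ≠ f w) :
    ∃ p : H.Walk u v, p.length = H.dist u v ∧ ∃ c, (p.support.map f).count c = 1 :=
  ⟨.cons huw hwv.toWalk, by simp [dist_eq_two_of_adj_of_adj huv hnadj huw hwv], f w,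
    by simp [hfu, hfv]⟩

end SimpleGraph

namespace IsSCFVC

variable {V α : Type*} [DecidableEq α] {H : SimpleGraph V} {f : V → α}

lemma ne_of_adj_s10 (hf : IsSCFVC H f) {u v : V} (h : H.Adj u v) : f u ≠ f v := by
  intro heq
  obtain ⟨p, hlen, c, hc⟩ := hf u v h.ne
  rw [dist_eq_one_iff_adj.mpr h] at hlen
  rw [Walk.support_eq_of_length_eq_one hlen] at hc
  by_cases hcv : f v = c <;> simp_all

lemma comp_injective {β : Type*} [DecidableEq β] (hf : IsSCFVC H f) {g : α → β}
    (hg : g.Injective) : IsSCFVC H (g ∘ f) := by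
  intro u v huv
  obtain ⟨p, hlen, c, hc⟩ := hf u v huv
  exact ⟨p, hlen, g c, by rwa [← List.map_map, List.count_map_of_injective _ _ hg]⟩

end IsSCFVC

namespace SimpleGraph

variable {V α : Type*} (G : SimpleGraph V)

lemma cone_adj_none (v : V) : (cone G).Adj none (some v) := by
  simp [cone]

lemma cone_adj_some_some {u v : V} : (cone G).Adj (some u) (some v) ↔ G.Adj u v := by
  simp only [cone, fromRel_adj, ne_eq, Option.some.injEq]
  exact ⟨fun ⟨_, h⟩ => h.elim id Adj.symm, fun h => ⟨h.ne, Or.inl h⟩⟩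

lemma cone_edist_le_two (x y : Option V) : (cone G).edist x y ≤ 2 :=
  edist_le_two_of_forall_adj (w := none)
    (fun x hx => by
      obtain ⟨v, rfl⟩ := Option.ne_none_iff_exists'.mp hx
      exact cone_adj_none G v) x y

lemma cone_diam_eq_two (h : ∃ u v : V, u ≠ v ∧ ¬ G.Adj u v) : (cone G).diam = 2 := by
  obtain ⟨u, v, huv, hnadj⟩ := h
  have hedist : (cone G).edist (some u) (some v) = 2 :=
    edist_eq_two_iff.mpr ⟨by simpa using huv, (cone_adj_some_some G).not.mpr hnadj,
      none, (cone_adj_none G u).symm, (cone_adj_none G v).symm⟩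
  have hediam : (cone G).ediam = 2 :=
    le_antisymm (ediam_le_of_edist_le (cone_edist_le_two G)) (hedist ▸ edist_le_ediam)
  rw [diam, hediam]
  rfl

variable {G}

def Coloring.toCone (C : G.Coloring α) : (cone G).Coloring (Option α) :=
  Coloring.mk (Option.map C) fun {x y} h => by
    cases x <;> cases y
    · exact (h.ne rfl).elim
    · simp
    · simp
    · simpa using C.valid ((cone_adj_some_some G).mp h)

lemma Coloring.isSCFVC_toCone [DecidableEq α] (C : G.Coloring α) :
    IsSCFVC (cone G) (Coloring.toCone C) := by
  intro x y hxy
  by_cases hadj : (cone G).Adj x y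
  · exact exists_shortest_walk_count_eq_one_of_adj hadj ((Coloring.toCone C).valid hadj)
  cases x with
  | none => cases y with
    | none => exact absurd rfl hxy
    | some v => exact absurd (cone_adj_none G v) hadj
  | some u => cases y with
    | none => exact absurd (cone_adj_none G u).symm hadj
    | some v =>
      exact exists_shortest_walk_count_eq_one_of_adj_of_adj hxy hadj
        (cone_adj_none G u).symm (cone_adj_none G v) (Option.some_ne_none _)
        (Option.some_ne_none _)

def Coloring.ofCone (C : (cone G).Coloring α) : G.Coloring {c // c ≠ C none} :=
  Coloring.mk (fun v => ⟨C (some v), C.valid (cone_adj_none G v).symm⟩)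
    fun h => by simpa using C.valid ((cone_adj_some_some G).mpr h)

lemma Colorable.of_coloring_cone [Fintype α] (C : (cone G).Coloring α) :
    G.Colorable (Fintype.card α - 1) := by
  classical
  rw [← Set.card_ne_eq (C none)]
  exact (Coloring.ofCone C).colorable

end SimpleGraph

theorem stmt10_general {V : Type*} (G : SimpleGraph V)
    (hnotcomplete : ∃ u v : V, u ≠ v ∧ ¬ G.Adj u v)
    (k : ℕ) (hk : 1 ≤ k) :
    (cone G).diam = 2 ∧
    (G.Colorable (k - 1) ↔ ∃ f : Option V → Fin k, IsSCFVC (cone G) f) := by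
  refine ⟨cone_diam_eq_two G hnotcomplete, fun ⟨C⟩ => ?_, fun ⟨f, hf⟩ => ?_⟩
  · let e : Option (Fin (k - 1)) ≃ Fin k :=
      (finSuccEquiv (k - 1)).symm.trans (finCongr (Nat.sub_add_cancel hk))
    exact ⟨e ∘ Coloring.toCone C, (Coloring.isSCFVC_toCone C).comp_injective e.injective⟩
  · simpa using Colorable.of_coloring_cone (Coloring.mk f hf.ne_of_adj_s10)

/-- If `G` has at least two vertices and is not complete, and `G'` is obtained from `G` by
adding a universal vertex, then `G'` has diameter exactly `2`, and for every `k ≥ 1`,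
`G` is `(k-1)`-colorable iff `G'` is strongly conflict-free vertex-connection
`k`-colorable. -/
theorem stmt10 {V : Type*} [Fintype V] (G : SimpleGraph V)
    (hcard : 2 ≤ Fintype.card V)
    (hnotcomplete : ∃ u v : V, u ≠ v ∧ ¬ G.Adj u v)
    (k : ℕ) (hk : 1 ≤ k) :
    (cone G).diam = 2 ∧
    (G.Colorable (k - 1) ↔ ∃ f : Option V → Fin k, IsSCFVC (cone G) f) :=
  stmt10_general G hnotcomplete k hk
end

section
/- Let G be a connected simple graph whose vertex set is partitioned into two cliques A and B with |A| = |B| ≥ 2, such that there is exactly one edge of G with one endpoint in A and the other in B. Then svcfc(G) = |A| + 1. -/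
open SimpleGraph

/-!
A strong conflict-free coloring is proper, since the only shortest path between adjacent
vertices is their edge; so it is injective on both cliques and uses at least `|A|` colors.
If it used exactly `|A|` colors, `A` and `B` would carry the same color set. Every path from
`A` to `B` crosses the edge `xy`, so for `a ≠ x` in `A` and `b ≠ y` in `B` the only shortest
`a,b`-path is `a x y b`. Choosing `f a = f b` (if `f x = f y`), or `f a = f y` and `f b = f x`
(otherwise), makes every color on it occur twice. Conversely, color `A` and `B \ {y}`
injectively with `|A|` colors and `y` with a new one: a shortest path between the cliques
visits `y` exactly once.
-/

open Set

theorem List.count_map_eq_count_of_apply_eq_imp {α β : Type*} [DecidableEq α] [DecidableEq β]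
    {f : α → β} {a : α} (hf : ∀ b, f b = f a → b = a) (l : List α) :
    (l.map f).count (f a) = l.count a := by
  rw [List.count_eq_countP, List.count_eq_countP, List.countP_map]
  refine List.countP_congr fun b _ => ?_
  simpa using ⟨hf b, fun h => h ▸ rfl⟩

section General

variable {V α : Type*} [DecidableEq α] {G : SimpleGraph V} {f : V → α}

theorem IsSCFVC.exists_count_map_eq_one (hf : IsSCFVC G f) {u v : V} (huv : u ≠ v)
    {l : List V} (hl : l.Nodup) (hlen : G.dist u v < l.length)
    (hsub : ∀ p : G.Walk u v, l ⊆ p.support) : ∃ c, (l.map f).count c = 1 := by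
  obtain ⟨p, hp, c, hc⟩ := hf u v huv
  have hperm : l.Perm p.support :=
    (hl.subperm (hsub p)).perm_of_length_le (by rw [p.length_support]; omega)
  exact ⟨c, (hperm.map f).count_eq c ▸ hc⟩

theorem IsSCFVC.ne_of_adj_s17 (hf : IsSCFVC G f) {u v : V} (huv : G.Adj u v) : f u ≠ f v := by
  obtain ⟨c, hc⟩ := hf.exists_count_map_eq_one huv.ne (l := [u, v]) (by simpa using huv.ne)
    (by simp [dist_eq_one_iff_adj.mpr huv])
    (fun p => by simp [List.subset_def, p.start_mem_support, p.end_mem_support])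
  intro h
  simp only [List.map_cons, List.map_nil, h, List.count_cons, List.count_nil] at hc
  split_ifs at hc <;> omega

theorem IsSCFVC.injOn (hf : IsSCFVC G f) {s : Set V} (hs : G.IsClique s) : s.InjOn f :=
  fun _ hu _ hv h => by_contra fun huv => hf.ne_of_adj_s17 (hs hu hv huv) h

theorem IsSCFVC.image_eq_univ_of_card_le {k : ℕ} {f : V → Fin k} (hf : IsSCFVC G f)
    {s : Finset V} (hs : G.IsClique (s : Set V)) (hk : k ≤ s.card) : f '' s = univ := by
  have hsurj : SurjOn f s univ := by
    simpa using Finset.surjOn_of_injOn_of_card_le f (t := Finset.univ)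
      (fun _ _ => Finset.mem_univ _) (hf.injOn hs) (by simpa using hk)
  exact eq_univ_of_univ_subset hsurj

theorem exists_walk_count_eq_one_of_adj {u v : V} (huv : G.Adj u v) (hf : f u ≠ f v) :
    ∃ p : G.Walk u v, p.length = G.dist u v ∧ ∃ c, (p.support.map f).count c = 1 :=
  ⟨.cons huv .nil, by simp [dist_eq_one_iff_adj.mpr huv], f u, by simp [hf]⟩

theorem exists_walk_count_eq_one_of_mem_support (hG : G.Connected) {u v w : V}
    (hw : ∀ p : G.Walk u v, w ∈ p.support) (hf : ∀ v, f v = f w → v = w) :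
    ∃ p : G.Walk u v, p.length = G.dist u v ∧ ∃ c, (p.support.map f).count c = 1 := by
  obtain ⟨p, hp⟩ := hG.exists_walk_length_eq_dist u v
  refine ⟨p, hp, f w, ?_⟩
  classical
  rw [List.count_map_eq_count_of_apply_eq_imp hf]
  exact List.count_eq_one_of_mem (p.isPath_of_length_eq_dist hp).support_nodup (hw p)

end General

section Bridge

variable {V α : Type*} [DecidableEq α] {G : SimpleGraph V} {A B : Set V} {x y : V}

theorem mem_support_of_bridge (hcover : ∀ v, v ∈ A ∨ v ∈ B) (hdisj : Disjoint A B)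
    (hbridge : ∀ a ∈ A, ∀ b ∈ B, G.Adj a b → a = x ∧ b = y) {a b : V} (ha : a ∈ A)
    (hb : b ∈ B) (p : G.Walk a b) : x ∈ p.support ∧ y ∈ p.support := by
  obtain ⟨d, hd, hdA, hdB⟩ := p.exists_boundary_dart A ha (hdisj.notMem_of_mem_right hb)
  obtain ⟨rfl, rfl⟩ := hbridge _ hdA _ ((hcover _).resolve_left hdB) d.adj
  exact ⟨p.dart_fst_mem_support_of_mem_darts hd, p.dart_snd_mem_support_of_mem_darts hd⟩

theorem isSCFVC_of_bridge (hG : G.Connected) (hcover : ∀ v, v ∈ A ∨ v ∈ B)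
    (hdisj : Disjoint A B) (hA : G.IsClique A) (hB : G.IsClique B)
    (hbridge : ∀ a ∈ A, ∀ b ∈ B, G.Adj a b → a = x ∧ b = y) {f : V → α} (hfA : A.InjOn f)
    (hfB : B.InjOn f) (hfy : ∀ v, f v = f y → v = y) : IsSCFVC G f := by
  intro u v huv
  rcases hcover u with hu | hu <;> rcases hcover v with hv | hv
  · exact exists_walk_count_eq_one_of_adj (hA hu hv huv) (hfA.ne hu hv huv)
  · exact exists_walk_count_eq_one_of_mem_support hG
      (fun p => (mem_support_of_bridge hcover hdisj hbridge hu hv p).2) hfy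
  · exact exists_walk_count_eq_one_of_mem_support hG
      (fun p => by simpa using (mem_support_of_bridge hcover hdisj hbridge hv hu p.reverse).2) hfy
  · exact exists_walk_count_eq_one_of_adj (hB hu hv huv) (hfB.ne hu hv huv)

theorem IsSCFVC.image_ne_of_bridge {f : V → α} (hf : IsSCFVC G f) (hcover : ∀ v, v ∈ A ∨ v ∈ B)
    (hdisj : Disjoint A B) (hA : G.IsClique A) (hB : G.IsClique B)
    (hbridge : ∀ a ∈ A, ∀ b ∈ B, G.Adj a b → a = x ∧ b = y) (hx : x ∈ A) (hy : y ∈ B)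
    (hxy : G.Adj x y) (hAnt : A.Nontrivial) : f '' A ≠ f '' B := by
  have hne {a b : V} (ha : a ∈ A) (hb : b ∈ B) : a ≠ b := hdisj.ne_of_mem ha hb
  have key {a b : V} (ha : a ∈ A) (hax : a ≠ x) (hb : b ∈ B) (hby : b ≠ y) :
      ∃ c, [f a, f x, f y, f b].count c = 1 := by
    refine hf.exists_count_map_eq_one (l := [a, x, y, b]) (hne ha hb) ?_ ?_ fun p => ?_
    · simp [hax, hne ha hy, hne ha hb, hne hx hy, hne hx hb, Ne.symm hby]
    · have := dist_le (.cons (hA ha hx hax) (.cons hxy (.cons (hB hy hb (Ne.symm hby)) .nil)))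
      simp only [Walk.length_cons, Walk.length_nil] at this
      simp only [List.length_cons, List.length_nil]
      omega
    · have := mem_support_of_bridge hcover hdisj hbridge ha hb p
      simp [List.subset_def, p.start_mem_support, p.end_mem_support, this]
  intro himage
  by_cases hfxy : f x = f y
  · obtain ⟨a, ha, hax⟩ := hAnt.exists_ne x
    obtain ⟨b, hb, hba⟩ : f a ∈ f '' B := himage ▸ mem_image_of_mem f ha
    have hfax : f a ≠ f x := hf.ne_of_adj_s17 (hA ha hx hax)
    obtain ⟨c, hc⟩ := key ha hax hb (by rintro rfl; exact hfax (hba ▸ hfxy.symm))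
    rw [hba, ← hfxy] at hc
    simp only [List.count_cons, List.count_nil] at hc
    split_ifs at hc <;> omega
  · obtain ⟨a, ha, hay⟩ : f y ∈ f '' A := himage ▸ mem_image_of_mem f hy
    obtain ⟨b, hb, hbx⟩ : f x ∈ f '' B := himage ▸ mem_image_of_mem f hx
    obtain ⟨c, hc⟩ := key ha (by rintro rfl; exact hfxy hay) hb
      (by rintro rfl; exact hfxy hbx.symm)
    rw [hay, hbx] at hc
    simp only [List.count_cons, List.count_nil] at hc
    split_ifs at hc <;> omega

end Bridge

theorem exists_fin_coloring_injOn {V : Type*} {A B : Finset V}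
    (hcover : ∀ v, v ∈ A ∨ v ∈ B) (hdisj : Disjoint A B) {n : ℕ} (hA : A.card = n)
    (hB : B.card = n) (y : V) :
    ∃ f : V → Fin (n + 1), InjOn f A ∧ InjOn f B ∧ ∀ v, f v = f y → v = y := by
  classical
  let g : V → Fin n := fun v =>
    if h : v ∈ A then A.equivFinOfCardEq hA ⟨v, h⟩
    else B.equivFinOfCardEq hB ⟨v, (hcover v).resolve_left h⟩
  have hgA : InjOn g A := fun v (hv : v ∈ A) w (hw : w ∈ A) h => by
    simpa [g, hv, hw] using h
  have hgB : InjOn g B := fun v (hv : v ∈ B) w (hw : w ∈ B) h => by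
    simpa [g, Finset.disjoint_right.mp hdisj hv, Finset.disjoint_right.mp hdisj hw] using h
  have hinj {s : Set V} (hg : s.InjOn g) :
      s.InjOn fun v => if v = y then Fin.last n else (g v).castSucc := fun v hv w hw h => by
    dsimp only at h
    split_ifs at h with hvy hwy hwy
    · exact hvy.trans hwy.symm
    · exact absurd h.symm (Fin.castSucc_ne_last _)
    · exact absurd h (Fin.castSucc_ne_last _)
    · exact hg hv hw (Fin.castSucc_injective _ h)
  refine ⟨_, hinj hgA, hinj hgB, fun v hv => ?_⟩
  by_contra hvy
  simp [hvy] at hv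

/-- Let `G` be connected, partitioned into two cliques `A`, `B` with `|A| = |B| ≥ 2` and
exactly one edge between `A` and `B`. Then `svcfc(G) = |A| + 1`. -/
theorem stmt17 {V : Type*} [Fintype V] [DecidableEq V] (G : SimpleGraph V)
    (hG : G.Connected) (A B : Finset V)
    (hdisj : Disjoint A B) (huniv : A ∪ B = Finset.univ)
    (hA : ∀ u ∈ A, ∀ v ∈ A, u ≠ v → G.Adj u v)
    (hB : ∀ u ∈ B, ∀ v ∈ B, u ≠ v → G.Adj u v)
    (hcard : A.card = B.card) (h2 : 2 ≤ A.card)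
    (x y : V) (hx : x ∈ A) (hy : y ∈ B) (hxy : G.Adj x y)
    (huniq : ∀ x' ∈ A, ∀ y' ∈ B, G.Adj x' y' → x' = x ∧ y' = y) :
    svcfc G = A.card + 1 := by
  have hcover (v : V) : v ∈ A ∨ v ∈ B := Finset.mem_union.mp (huniv ▸ Finset.mem_univ v)
  have hdisj' : Disjoint (A : Set V) B := Finset.disjoint_coe.mpr hdisj
  obtain ⟨f, hfA, hfB, hfy⟩ := exists_fin_coloring_injOn hcover hdisj rfl hcard.symm y
  have hmem : A.card + 1 ∈ {k | ∃ f : V → Fin k, IsSCFVC G f} :=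
    ⟨f, isSCFVC_of_bridge hG hcover hdisj' hA hB huniq hfA hfB hfy⟩
  refine le_antisymm (Nat.sInf_le hmem) (le_csInf ⟨_, hmem⟩ fun k ⟨g, hg⟩ => ?_)
  by_contra! hk
  have hgA : g '' A = univ := hg.image_eq_univ_of_card_le hA (by omega)
  have hgB : g '' B = univ := hg.image_eq_univ_of_card_le hB (by omega)
  exact hg.image_ne_of_bridge hcover hdisj' hA hB huniq hx hy hxy
    (Finset.one_lt_card_iff_nontrivial.mp h2) (hgA.trans hgB.symm)
end

section
/- Let G be a connected simple graph whose vertex set is partitioned into two cliques A and B with |A| > |B| ≥ 1, such that there is exactly one edge of G with one endpoint in A and the other in B. Then svcfc(G) = |A|. -/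
open SimpleGraph

private lemma support_len1 {V : Type*} {G : SimpleGraph V} {u v : V} (p : G.Walk u v)
    (h : p.length = 1) : p.support = [u, v] := by
  cases p with
  | nil => simp at h
  | cons hadj q =>
    cases q with
    | nil => simp
    | cons h1 q1 => simp [SimpleGraph.Walk.length_cons] at h

private lemma exists_mid_of_len2 {V : Type*} {G : SimpleGraph V} {u v : V} (p : G.Walk u v)
    (h : p.length = 2) : ∃ w, G.Adj u w ∧ G.Adj w v := by
  cases p with
  | nil => simp at h
  | cons hadj q =>
    cases q with
    | nil => simp at h
    | cons h1 q1 =>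
      cases q1 with
      | nil => exact ⟨_, hadj, h1⟩
      | cons _ _ => simp [SimpleGraph.Walk.length_cons] at h

/-- Let `G` be connected, partitioned into two cliques `A`, `B` with `|A| > |B| ≥ 1` and
exactly one edge between `A` and `B`. Then `svcfc(G) = |A|`. -/
theorem stmt18 {V : Type*} [Fintype V] [DecidableEq V] (G : SimpleGraph V)
    (hG : G.Connected) (A B : Finset V)
    (hdisj : Disjoint A B) (huniv : A ∪ B = Finset.univ)
    (hA : ∀ u ∈ A, ∀ v ∈ A, u ≠ v → G.Adj u v)
    (hB : ∀ u ∈ B, ∀ v ∈ B, u ≠ v → G.Adj u v)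
    (hcard : B.card < A.card) (h1 : 1 ≤ B.card)
    (x y : V) (hx : x ∈ A) (hy : y ∈ B) (hxy : G.Adj x y)
    (huniq : ∀ x' ∈ A, ∀ y' ∈ B, G.Adj x' y' → x' = x ∧ y' = y) :
    svcfc G = A.card := by
  classical
  have hmemAB : ∀ v : V, v ∈ A ∨ v ∈ B := fun v => by
    have h := Finset.mem_univ v
    rw [← huniv] at h
    exact Finset.mem_union.mp h
  have hne_of : ∀ {a b : V}, a ∈ A → b ∈ B → a ≠ b := by
    intro a b ha hb h
    subst h
    exact (Finset.disjoint_left.mp hdisj ha) hb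
  have hdist_ne0 : ∀ {u v : V}, u ≠ v → G.dist u v ≠ 0 := by
    intro u v h h0
    rcases dist_eq_zero_iff_eq_or_not_reachable.mp h0 with h' | h'
    · exact h h'
    · exact h' (hG u v)
  have hnadjA : ∀ {u v : V}, u ∈ A → v ∈ B → ¬(u = x ∧ v = y) → ¬G.Adj u v := by
    intro u v hu hv hne hadj
    exact hne (huniq u hu v hv hadj)
  -- distance facts
  have hdist3 : ∀ {u v : V}, u ∈ A → v ∈ B → u ≠ x → v ≠ y → G.dist u v = 3 := by
    intro u v hu hv hux hvy
    have hle : G.dist u v ≤ 3 := by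
      have h := dist_le (Walk.cons (hA u hu x hx hux)
        (Walk.cons hxy (Walk.cons (hB y hy v hv (fun h => hvy h.symm)) Walk.nil)))
      simpa using h
    have h0 : G.dist u v ≠ 0 := hdist_ne0 (hne_of hu hv)
    have h1' : G.dist u v ≠ 1 := by
      intro h
      exact hnadjA hu hv (fun hc => hux hc.1) (dist_eq_one_iff_adj.mp h)
    have h2' : G.dist u v ≠ 2 := by
      intro h
      obtain ⟨p, hp⟩ := hG.exists_walk_length_eq_dist u v
      rw [h] at hp
      obtain ⟨w, huw, hwv⟩ := exists_mid_of_len2 p hp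
      rcases hmemAB w with hw | hw
      · exact hvy (huniq w hw v hv hwv).2
      · exact hux (huniq u hu w hw huw).1
    omega
  have hdist2l : ∀ {u v : V}, u ∈ A → v ∈ B → ¬(u = x ∧ v = y) → 2 ≤ G.dist u v := by
    intro u v hu hv hne
    have h0 : G.dist u v ≠ 0 := hdist_ne0 (hne_of hu hv)
    have h1' : G.dist u v ≠ 1 := by
      intro h
      exact hnadjA hu hv hne (dist_eq_one_iff_adj.mp h)
    omega
  -- the set defining svcfc
  set S : Set ℕ := {k | ∃ f : V → Fin k, IsSCFVC G f} with hS
  -- Upper bound: construct a coloring with A.card colors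
  have hA2 : 2 ≤ A.card := by omega
  have hcardE : (A.erase x).card = A.card - 1 := Finset.card_erase_of_mem hx
  have hle : B.card ≤ (A.erase x).card := by omega
  let φ : {a // a ∈ A} ≃ Fin A.card := A.equivFin
  let eB : {b // b ∈ B} ≃ Fin B.card := B.equivFin
  let eE : {a // a ∈ A.erase x} ≃ Fin (A.erase x).card := (A.erase x).equivFin
  let ψ : {b // b ∈ B} → {a // a ∈ A.erase x} := fun b => eE.symm (Fin.castLE hle (eB b))
  have hψinj : Function.Injective ψ := by
    intro a b h
    apply eB.injective
    have := eE.symm.injective h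
    exact Fin.castLE_injective hle this
  let f : V → Fin A.card := fun v =>
    if hv : v ∈ A then φ ⟨v, hv⟩
    else φ ⟨(ψ ⟨v, (hmemAB v).resolve_left hv⟩ : {a // a ∈ A.erase x}).1,
      Finset.mem_of_mem_erase (ψ ⟨v, (hmemAB v).resolve_left hv⟩).2⟩
  have fA : ∀ {a : V} (ha : a ∈ A), f a = φ ⟨a, ha⟩ := by
    intro a ha; simp only [f, dif_pos ha]
  have fB : ∀ {b : V} (hb : b ∈ B),
      f b = φ ⟨(ψ ⟨b, hb⟩ : {a // a ∈ A.erase x}).1,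
        Finset.mem_of_mem_erase (ψ ⟨b, hb⟩).2⟩ := by
    intro b hb
    have hbA : b ∉ A := fun h => hne_of h hb rfl
    simp only [f, dif_neg hbA]
  have finjA : ∀ {a a' : V}, a ∈ A → a' ∈ A → f a = f a' → a = a' := by
    intro a a' ha ha' h
    rw [fA ha, fA ha'] at h
    exact Subtype.ext_iff.mp (φ.injective h)
  have finjB : ∀ {b b' : V}, b ∈ B → b' ∈ B → f b = f b' → b = b' := by
    intro b b' hb hb' h
    rw [fB hb, fB hb'] at h
    have h2 := congrArg Subtype.val (φ.injective h)
    exact congrArg Subtype.val (hψinj (Subtype.ext h2))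
  have fBnex : ∀ {b : V} (hb : b ∈ B), f b ≠ f x := by
    intro b hb h
    rw [fB hb, fA hx] at h
    have := Subtype.ext_iff.mp (φ.injective h)
    exact Finset.ne_of_mem_erase (ψ ⟨b, hb⟩).2 this
  have fAnex : ∀ {a : V}, a ∈ A → a ≠ x → f a ≠ f x := by
    intro a ha hax h
    exact hax (finjA ha hx h)
  -- key: coloring works for u ∈ A, v ∈ B
  have key : ∀ u v : V, u ∈ A → v ∈ B → ∃ p : G.Walk u v, p.length = G.dist u v ∧
      ∃ c : Fin A.card, (p.support.map f).count c = 1 := by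
    intro u v hu hv
    by_cases hux : u = x
    · subst hux
      by_cases hvy : v = y
      · subst hvy
        refine ⟨Walk.cons hxy Walk.nil, ?_, f u, ?_⟩
        · rw [dist_eq_one_iff_adj.mpr hxy]; simp
        · have := fBnex hy
          simp [List.count_cons, this]
      · have hadj : G.Adj y v := hB y hy v hv (fun h => hvy h.symm)
        refine ⟨Walk.cons hxy (Walk.cons hadj Walk.nil), ?_, f u, ?_⟩
        · have hle2 : G.dist u v ≤ 2 := by
            calc G.dist u v ≤ (Walk.cons hxy (Walk.cons hadj Walk.nil)).length := dist_le _
              _ = 2 := by simp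
          have := hdist2l hu hv (fun hc => hvy hc.2)
          simp only [Walk.length_cons, Walk.length_nil]
          omega
        · have h1 := fBnex hy
          have h2 := fBnex hv
          simp [List.count_cons, h1, h2]
    · by_cases hvy : v = y
      · subst hvy
        have hadj : G.Adj u x := hA u hu x hx hux
        refine ⟨Walk.cons hadj (Walk.cons hxy Walk.nil), ?_, f x, ?_⟩
        · have hle2 : G.dist u v ≤ 2 := by
            calc G.dist u v ≤ (Walk.cons hadj (Walk.cons hxy Walk.nil)).length := dist_le _
              _ = 2 := by simp
          have := hdist2l hu hv (fun hc => hux hc.1)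
          simp only [Walk.length_cons, Walk.length_nil]
          omega
        · have h1 := fAnex hu hux
          have h2 := fBnex hv
          simp [List.count_cons, h1, h2]
      · have hadj1 : G.Adj u x := hA u hu x hx hux
        have hadj2 : G.Adj y v := hB y hy v hv (fun h => hvy h.symm)
        refine ⟨Walk.cons hadj1 (Walk.cons hxy (Walk.cons hadj2 Walk.nil)), ?_, f x, ?_⟩
        · rw [hdist3 hu hv hux hvy]; simp
        · have h1 := fAnex hu hux
          have h2 := fBnex hy
          have h3 := fBnex hv
          simp [List.count_cons, h1, h2, h3]
  have hclique : ∀ (C : Finset V), (∀ u ∈ C, ∀ v ∈ C, u ≠ v → G.Adj u v) →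
      ∀ u v : V, u ∈ C → v ∈ C → u ≠ v →
      (∀ {a a' : V}, a ∈ C → a' ∈ C → f a = f a' → a = a') →
      ∃ p : G.Walk u v, p.length = G.dist u v ∧
        ∃ c : Fin A.card, (p.support.map f).count c = 1 := by
    intro C hC u v hu hv huv hinj
    have hadj : G.Adj u v := hC u hu v hv huv
    refine ⟨Walk.cons hadj Walk.nil, ?_, f u, ?_⟩
    · rw [dist_eq_one_iff_adj.mpr hadj]; simp
    · have : f v ≠ f u := fun h => huv (hinj hv hu h).symm
      simp [List.count_cons, this]
  have hSCFVC : IsSCFVC G f := by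
    intro u v huv
    rcases hmemAB u with hu | hu <;> rcases hmemAB v with hv | hv
    · exact hclique A hA u v hu hv huv (fun ha ha' => finjA ha ha')
    · exact key u v hu hv
    · obtain ⟨p, hl, c, hc⟩ := key v u hv hu
      refine ⟨p.reverse, ?_, c, ?_⟩
      · rw [Walk.length_reverse, hl]
        exact SimpleGraph.dist_comm
      · rw [Walk.support_reverse, List.map_reverse, List.count_reverse]
        exact hc
    · exact hclique B hB u v hu hv huv (fun hb hb' => finjB hb hb')
  have hmem : A.card ∈ S := ⟨f, hSCFVC⟩
  -- Lower bound
  have hlow : ∀ k ∈ S, A.card ≤ k := by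
    rintro k ⟨g, hg⟩
    have hinj : Set.InjOn g (A : Set V) := by
      intro a ha a' ha' h
      by_contra hne
      obtain ⟨p, hl, c, hc⟩ := hg a a' hne
      have hd : G.dist a a' = 1 :=
        dist_eq_one_iff_adj.mpr (hA a ha a' ha' hne)
      rw [hd] at hl
      rw [support_len1 p hl] at hc
      simp only [List.map_cons, List.map_nil] at hc
      rw [h] at hc
      rcases eq_or_ne (g a') c with h' | h' <;> simp [List.count_cons, h'] at hc
    have : A.card ≤ (Finset.univ : Finset (Fin k)).card :=
      Finset.card_le_card_of_injOn g (fun a _ => Finset.mem_univ _) hinj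
    simpa using this
  have hSne : S.Nonempty := ⟨A.card, hmem⟩
  exact le_antisymm (Nat.sInf_le hmem) (le_csInf hSne hlow)
end
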